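/- arXiv:1005.2546 — 5 statements merged into one kernel-verified Lean document; each statement's English description precedes it below -/
import Mathlib

section
/- Let k be a field of characteristic p > 0 and A an associative unital k-algebra. Then for all a, b ∈ A and every n ∈ ℕ, the element (a + b)^{p^n} − a^{p^n} − b^{p^n} lies in KA. Consequently the p^n-power map induces a well-defined additive map on the quotient k-vector space A/KA. -/
/-!
Expand `(a + b) ^ p` as the sum of the products of all words of length `p` in `a` and `b`.
Rotating a word does not change its product modulo `[A, A]`, since `[x * y] = [y * x]`; so the
classes of the products are invariant under the action of the cyclic group of order `p` on words.
For an action of a `p`-group, every non-trivial orbit has size divisible by `p`, so modulo `p`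
only the fixed words, the constant words `a ⋯ a` and `b ⋯ b`, contribute. This makes
`[a] ↦ [a ^ p]` a well defined additive (indeed Frobenius-semilinear) self-map of `A ⧸ [A, A]`:
it kills commutators because `[(x * y) ^ p] = [(y * x) ^ p]`. Its `n`-th iterate is the
`p ^ n`-power map.
-/

open MulAction

/-- `KA`: the `k`-linear span in `A` of all commutators `a*b - b*a`. -/
def commutatorSpan (k A : Type*) [Field k] [Ring A] [Algebra k A] : Submodule k A :=
  Submodule.span k {x : A | ∃ a b : A, x = a * b - b * a}

theorem sum_pow_eq_sum_prod_ofFn {R ι : Type*} [Semiring R] [Fintype ι] (x : ι → R) (n : ℕ) :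
    (∑ i, x i) ^ n = ∑ w : Fin n → ι, (List.ofFn fun j => x (w j)).prod := by
  induction n with
  | zero => simp
  | succ n ih =>
    rw [pow_succ', ih, Finset.sum_mul_sum, ← (Fin.consEquiv fun _ => ι).sum_comp,
      Fintype.sum_prod_type]
    simp [List.ofFn_succ]

theorem IsPGroup.sum_eq_zero_of_eq_zero_on_fixedPoints {p : ℕ} [Fact p.Prime]
    {G α M : Type*} [Group G] [MulAction G α] [Fintype α] [AddCommMonoid M]
    (hG : IsPGroup p G) (hM : ∀ m : M, p • m = 0) {f : α → M}
    (hf : ∀ (g : G) x, f (g • x) = f x) (hfix : ∀ x ∈ fixedPoints G α, f x = 0) :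
    ∑ x, f x = 0 := by
  classical
  rw [← (selfEquivSigmaOrbits G α).symm.sum_comp, Fintype.sum_sigma]
  refine Fintype.sum_eq_zero _ fun ω => ?_
  have hconst : ∀ y : orbit G ω.out, f y = f ω.out := by
    rintro ⟨_, g, rfl⟩; exact hf g _
  change ∑ y : orbit G ω.out, f y = 0
  rw [Fintype.sum_congr _ _ hconst, Finset.sum_const, Finset.card_univ]
  obtain ⟨n, hn⟩ := hG.card_orbit ω.out
  rw [Nat.card_eq_fintype_card] at hn
  rcases n with _ | n
  · rw [hfix _ (mem_fixedPoints_iff_card_orbit_eq_one.mpr hn), smul_zero]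
  · rw [hn, pow_succ', mul_smul, hM]

theorem IsPGroup.sum_eq_sum_fixedPoints {p : ℕ} [Fact p.Prime]
    {G α M : Type*} [Group G] [MulAction G α] [Fintype α] [AddCommMonoid M]
    [DecidablePred (· ∈ fixedPoints G α)]
    (hG : IsPGroup p G) (hM : ∀ m : M, p • m = 0) {f : α → M}
    (hf : ∀ (g : G) x, f (g • x) = f x) :
    ∑ x, f x = ∑ x with x ∈ fixedPoints G α, f x := by
  have hfixed : ∀ (g : G) x, g • x ∈ fixedPoints G α ↔ x ∈ fixedPoints G α := by
    refine fun g x => ⟨fun h => ?_, fun h => (h g).symm ▸ h⟩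
    rwa [← inv_smul_smul g x, h g⁻¹]
  have hrest : ∑ x with x ∉ fixedPoints G α, f x = 0 := by
    rw [Finset.sum_filter]
    exact hG.sum_eq_zero_of_eq_zero_on_fixedPoints hM (fun g x => by simp only [hfixed, hf])
      fun x hx => if_neg (not_not.2 hx)
  rw [← Finset.sum_filter_add_sum_filter_not Finset.univ (· ∈ fixedPoints G α), hrest,
    add_zero]

namespace commutatorSpan

open Submodule.Quotient

variable {k A : Type*} [Field k] [Ring A] [Algebra k A]

theorem mk_mul_comm (x y : A) :
    (mk (x * y) : A ⧸ commutatorSpan k A) = mk (y * x) :=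
  (Submodule.Quotient.eq _).2 (Submodule.subset_span ⟨x, y, rfl⟩)

theorem mk_mul_pow_comm (x y : A) (n : ℕ) :
    (mk ((x * y) ^ n) : A ⧸ commutatorSpan k A) = mk ((y * x) ^ n) := by
  cases n with
  | zero => simp only [pow_zero]
  | succ n =>
    rw [pow_succ, ← mul_assoc, mk_mul_comm, mul_pow_mul, ← mul_assoc, ← pow_succ']

theorem mk_prod_ofFn_add_one {n : ℕ} (v : Fin (n + 1) → A) :
    (mk (List.ofFn fun i => v (i + 1)).prod : A ⧸ commutatorSpan k A) =
      mk (List.ofFn v).prod := by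
  have hrot : List.ofFn (fun i => v (i + 1)) = List.ofFn (fun i => v i.succ) ++ [v 0] := by
    rw [List.ofFn_succ']
    simp only [Fin.coeSucc_eq_succ, Fin.last_add_one, List.concat_eq_append]
  rw [hrot, List.prod_append, List.prod_singleton, mk_mul_comm, ← List.prod_cons,
    ← List.ofFn_succ]

theorem mk_prod_ofFn_add {n : ℕ} (v : Fin (n + 1) → A) (σ : Fin (n + 1)) :
    (mk (List.ofFn fun i => v (i + σ)).prod : A ⧸ commutatorSpan k A) =
      mk (List.ofFn v).prod := by
  induction σ using Fin.induction with
  | zero => simp only [add_zero]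
  | succ σ ih =>
    rw [← Fin.coeSucc_eq_succ, ← ih, ← mk_prod_ofFn_add_one fun i => v (i + σ.castSucc)]
    simp only [add_assoc, add_comm (1 : Fin (n + 1))]

theorem mk_add_pow_char (p : ℕ) [Fact p.Prime] [CharP k p] (a b : A) :
    (mk ((a + b) ^ p) : A ⧸ commutatorSpan k A) = mk (a ^ p) + mk (b ^ p) := by
  classical
  obtain ⟨n, rfl⟩ := Nat.exists_eq_add_one_of_ne_zero (Fact.out : p.Prime).ne_zero
  -- cyclic rotation of words: `(g • w) i = w (i - g)`
  let _ : MulAction (Multiplicative (Fin (n + 1))) (Fin (n + 1) → Bool) := arrowAction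
  let word (w : Fin (n + 1) → Bool) : A := (List.ofFn fun i => bif w i then a else b).prod
  have hG : IsPGroup (n + 1) (Multiplicative (Fin (n + 1))) := IsPGroup.of_card (n := 1) (by simp)
  have hchar (m : A ⧸ commutatorSpan k A) : (n + 1) • m = 0 := by
    rw [← Nat.cast_smul_eq_nsmul k, CharP.cast_eq_zero, zero_smul]
  have hrot (g : Multiplicative (Fin (n + 1))) (w : Fin (n + 1) → Bool) :
      (mk (word (g • w)) : A ⧸ commutatorSpan k A) = mk (word w) := by
    have hgw : g • w = fun i => w (i + -g.toAdd) := funext fun i => congrArg w (add_comm _ _)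
    rw [hgw]
    exact mk_prod_ofFn_add (fun i => bif w i then a else b) _
  have hfixed :
      ({w | w ∈ fixedPoints (Multiplicative (Fin (n + 1))) (Fin (n + 1) → Bool)} : Finset _) =
        Finset.univ.image fun (c : Bool) (_ : Fin (n + 1)) => c := by
    ext w
    simp only [Finset.mem_filter, Finset.mem_univ, true_and, Finset.mem_image,
      mem_fixedPoints]
    refine ⟨fun hw => ⟨w 0, funext fun i => ?_⟩, fun ⟨c, hc⟩ g => hc ▸ rfl⟩
    have hi : w (-(-i) + 0) = w 0 := congrFun (hw (.ofAdd (-i))) 0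
    rwa [neg_neg, add_zero, eq_comm] at hi
  have hsum : a + b = ∑ c : Bool, bif c then a else b := by simp
  rw [hsum, sum_pow_eq_sum_prod_ofFn, ← Submodule.mkQ_apply, map_sum,
    hG.sum_eq_sum_fixedPoints hchar hrot, hfixed, Finset.sum_image, Fintype.sum_bool]
  · simp [pow_succ']
  · exact fun c _ d _ h => congrFun h 0

variable (k) (p : ℕ) [Fact p.Prime] [CharP k p]

def frobeniusMkQ : A →ₛₗ[frobenius k p] A ⧸ commutatorSpan k A where
  toFun a := mk (a ^ p)
  map_add' := mk_add_pow_char p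
  map_smul' c a := by rw [smul_pow, mk_smul]; rfl

theorem le_ker_frobeniusMkQ : commutatorSpan k A ≤ LinearMap.ker (frobeniusMkQ k p) :=
  Submodule.span_le.2 fun _ ⟨x, y, hxy⟩ => by
    rw [hxy, SetLike.mem_coe, LinearMap.mem_ker, map_sub, sub_eq_zero]
    exact mk_mul_pow_comm x y p

def quotientFrobenius :
    A ⧸ commutatorSpan k A →ₛₗ[frobenius k p] A ⧸ commutatorSpan k A :=
  (commutatorSpan k A).liftQ (frobeniusMkQ k p) (le_ker_frobeniusMkQ k p)

theorem quotientFrobenius_iterate_mk (n : ℕ) (a : A) :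
    (quotientFrobenius k p)^[n] (mk a) = mk (a ^ p ^ n) := by
  induction n with
  | zero => simp
  | succ n ih =>
    rw [Function.iterate_succ_apply', ih, pow_succ, pow_mul]
    rfl

end commutatorSpan

/-- For a field `k` of characteristic `p > 0` and an associative unital `k`-algebra `A`,
for all `a b ∈ A` and `n ∈ ℕ` the element `(a+b)^{p^n} - a^{p^n} - b^{p^n}` lies in `KA`;
consequently the `p^n`-power map induces a well-defined additive map on `A/KA`. -/
theorem pow_pn_add_sub_mem_commutatorSpan
    (k A : Type*) [Field k] [Ring A] [Algebra k A]
    (p : ℕ) [Fact p.Prime] [CharP k p] :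
    (∀ (a b : A) (n : ℕ),
        (a + b) ^ p ^ n - a ^ p ^ n - b ^ p ^ n ∈ commutatorSpan k A) ∧
    (∀ n : ℕ, ∃ φ : (A ⧸ commutatorSpan k A) →+ (A ⧸ commutatorSpan k A),
        ∀ a : A, φ (Submodule.Quotient.mk a) = Submodule.Quotient.mk (a ^ p ^ n)) := by
  let frob : AddMonoid.End (A ⧸ commutatorSpan k A) :=
    (commutatorSpan.quotientFrobenius k p).toAddMonoidHom
  have hφ (n : ℕ) (x : A) :
      (frob ^ n) (Submodule.Quotient.mk x) = Submodule.Quotient.mk (x ^ p ^ n) :=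
    commutatorSpan.quotientFrobenius_iterate_mk k p n x
  refine ⟨fun a b n => ?_, fun n => ⟨frob ^ n, hφ n⟩⟩
  open Submodule.Quotient in
  rw [← mk_eq_zero, mk_sub, mk_sub, ← hφ, ← hφ, ← hφ, mk_add, map_add, add_sub_cancel_left,
    sub_self]
end

section
/- Let k be a field of characteristic p > 0 and A an associative unital k-algebra. Then for every c ∈ KA one has c^p ∈ KA; consequently T_n(A) ⊆ T_{n+1}(A) for all n ∈ ℕ, i.e. the subspaces T_n(A) form an ascending chain containing KA = T_0(A). -/
/-!
Modulo `KA` the map `x ↦ x ^ p` is additive. Indeed `(x + y) ^ p` is the sum of all words of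
length `p` in `x` and `y`; a word and its cyclic rotations agree modulo `KA`, and rotation is a
permutation of order `p` of the set of words whose fixed points are the two constant words. So
the remaining words fall into orbits of size `p`, which cancel in characteristic `p`, leaving
`x ^ p + y ^ p`. As also `(a * b) ^ p ≡ (b * a) ^ p`, this additive map kills every commutator,
hence all of `KA`.
-/

open Finset

theorem Equiv.Perm.sum_eq_sum_compl_support {X R M : Type*} [Fintype X] [DecidableEq X]
    [Semiring R] [AddCommMonoid M] [Module R M] (p : ℕ) [Fact p.Prime] [CharP R p] {n : ℕ}
    {σ : Equiv.Perm X} (hσ : σ ^ p ^ n = 1) {φ : X → M} (hφ : ∀ x, φ (σ x) = φ x) :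
    ∑ x, φ x = ∑ x ∈ σ.supportᶜ, φ x := by
  classical
  have hmaps : ∀ x ∈ (univ : Finset X), φ x ∈ univ.image φ :=
    fun x _ => mem_image_of_mem φ (mem_univ x)
  rw [← sum_fiberwise_of_maps_to hmaps,
    ← sum_fiberwise_of_maps_to fun x _ => hmaps x (mem_univ x)]
  refine sum_congr rfl fun m _ => ?_
  rw [sum_congr rfl fun x hx => (mem_filter.1 hx).2, sum_congr rfl fun x hx => (mem_filter.1 hx).2,
    sum_const, sum_const, ← Nat.cast_smul_eq_nsmul R, ← Nat.cast_smul_eq_nsmul R]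
  congr 1
  apply CharP.natCast_eq_natCast'
  -- `σ` restricts to the fibre over `m`, where points and fixed points agree in number mod `p`.
  let τ : Equiv.Perm {x // φ x = m} := σ.subtypePerm fun x => by simp [hφ]
  have hτ : τ ^ p ^ n = 1 := by
    rw [Equiv.Perm.subtypePerm_pow]
    ext
    simp [hσ]
  have hτ_fixed : τ.supportᶜ = σ.supportᶜ.subtype (φ · = m) := by
    ext
    simp [τ, Subtype.ext_iff]
  have := (Equiv.Perm.card_compl_support_modEq hτ).symm
  rwa [hτ_fixed, card_subtype, Fintype.card_subtype] at this

theorem add_pow_eq_sum_prod_ofFn_cond {A : Type*} [Semiring A] (x y : A) (n : ℕ) :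
    (x + y) ^ n = ∑ f : Fin n → Bool, (List.ofFn fun i => cond (f i) x y).prod := by
  simpa [Fintype.sum_bool] using
    (MultilinearMap.mkPiAlgebraFin ℕ n A).map_sum fun _ (b : Bool) => cond b x y

section precompFinRotate

open Fin.NatCast

def precompFinRotate (n : ℕ) (β : Type*) : Equiv.Perm (Fin n → β) :=
  (finRotate n).symm.arrowCongr (Equiv.refl β)

variable {n : ℕ} {β : Type*}

@[simp]
theorem precompFinRotate_apply (f : Fin n → β) : precompFinRotate n β f = f ∘ finRotate n :=
  rfl

theorem precompFinRotate_pow_apply [NeZero n] (j : ℕ) (f : Fin n → β) (i : Fin n) :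
    (precompFinRotate n β ^ j) f i = f (i + (j : Fin n)) := by
  induction j generalizing f with
  | zero => simp
  | succ j ih => simp [pow_succ, ih, finRotate_apply, add_assoc]

theorem precompFinRotate_pow_self : precompFinRotate n β ^ n = 1 := by
  cases n with
  | zero => ext f i; exact i.elim0
  | succ n => ext f i; simp [precompFinRotate_pow_apply]

theorem precompFinRotate_apply_eq_self_iff [NeZero n] {f : Fin n → β} :
    precompFinRotate n β f = f ↔ ∃ b, f = Function.const _ b := by
  refine ⟨fun hf => ⟨f 0, funext fun i => ?_⟩, fun ⟨b, hb⟩ => hb ▸ rfl⟩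
  have hfix : (precompFinRotate n β ^ i.val) f = f :=
    Equiv.Perm.pow_apply_eq_self_of_apply_eq_self hf _
  calc f i = f (0 + (i.val : Fin n)) := by rw [zero_add, Fin.cast_val_eq_self]
    _ = (precompFinRotate n β ^ i.val) f 0 := (precompFinRotate_pow_apply _ _ _).symm
    _ = f 0 := by rw [hfix]

end precompFinRotate

namespace commutatorSpan

variable {k A : Type*} [Field k] [Ring A] [Algebra k A]

theorem mkQ_mul_comm (a b : A) :
    (commutatorSpan k A).mkQ (a * b) = (commutatorSpan k A).mkQ (b * a) := by
  rw [Submodule.mkQ_apply, Submodule.mkQ_apply, Submodule.Quotient.eq]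
  exact Submodule.subset_span ⟨a, b, rfl⟩

theorem mkQ_prod_ofFn_comp_finRotate {n : ℕ} (v : Fin n → A) :
    (commutatorSpan k A).mkQ (List.ofFn (v ∘ finRotate n)).prod =
      (commutatorSpan k A).mkQ (List.ofFn v).prod := by
  cases n with
  | zero => rfl
  | succ n =>
    induction v using Fin.consCases with
    | cons a w =>
      have hsnoc : Fin.cons a w ∘ finRotate (n + 1) = Fin.snoc w a :=
        (Fin.snoc_eq_cons_rotate w a).symm
      rw [hsnoc, List.ofFn_succ', List.ofFn_cons]
      simp only [Fin.snoc_castSucc, Fin.snoc_last, List.prod_concat, List.prod_cons]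
      exact mkQ_mul_comm _ _

theorem mkQ_mul_pow_comm (a b : A) (n : ℕ) :
    (commutatorSpan k A).mkQ ((a * b) ^ n) = (commutatorSpan k A).mkQ ((b * a) ^ n) := by
  cases n with
  | zero => simp
  | succ n => rw [pow_succ, ← mul_assoc, mul_pow_mul, mkQ_mul_comm, ← mul_assoc, ← pow_succ']

variable (p : ℕ) [Fact p.Prime] [CharP k p]

theorem mkQ_add_pow (x y : A) :
    (commutatorSpan k A).mkQ ((x + y) ^ p) =
      (commutatorSpan k A).mkQ (x ^ p) + (commutatorSpan k A).mkQ (y ^ p) := by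
  classical
  have hfixed : (precompFinRotate p Bool).supportᶜ =
      univ.map ⟨Function.const (Fin p), Function.const_injective⟩ := by
    ext f
    simp only [mem_compl, Equiv.Perm.mem_support, not_not, precompFinRotate_apply_eq_self_iff,
      mem_map, mem_univ, true_and, Function.Embedding.coeFn_mk]
    exact exists_congr fun _ => eq_comm
  have hσ : precompFinRotate p Bool ^ p ^ 1 = 1 := by rw [pow_one, precompFinRotate_pow_self]
  rw [add_pow_eq_sum_prod_ofFn_cond, map_sum,
    Equiv.Perm.sum_eq_sum_compl_support (R := k) p hσ
      fun f => mkQ_prod_ofFn_comp_finRotate fun i => cond (f i) x y,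
    hfixed, sum_map, Fintype.sum_bool]
  simp [List.ofFn_const]

theorem pow_mem {c : A} (hc : c ∈ commutatorSpan k A) : c ^ p ∈ commutatorSpan k A := by
  let F : A →+ A ⧸ commutatorSpan k A :=
    AddMonoidHom.mk' (fun z => (commutatorSpan k A).mkQ (z ^ p)) (mkQ_add_pow p)
  suffices F c = 0 by simpa [F] using this
  induction hc using Submodule.span_induction with
  | mem x hx =>
    obtain ⟨a, b, rfl⟩ := hx
    rw [map_sub]
    exact sub_eq_zero.mpr (mkQ_mul_pow_comm a b p)
  | zero => exact map_zero F
  | add u v _ _ hu hv => rw [map_add, hu, hv, add_zero]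
  | smul t u _ hu =>
    change (commutatorSpan k A).mkQ (u ^ p) = 0 at hu
    change (commutatorSpan k A).mkQ ((t • u) ^ p) = 0
    rw [smul_pow, map_smul, hu, smul_zero]

end commutatorSpan

/-- For a field `k` of characteristic `p > 0` and a `k`-algebra `A`: every `c ∈ KA`
satisfies `c^p ∈ KA`; consequently `T_n(A) = {x | x^{p^n} ∈ KA}` satisfies
`T_n(A) ⊆ T_{n+1}(A)` for all `n`, and `T_0(A) = KA`. -/
theorem pow_p_mem_commutatorSpan_and_Tn_mono
    (k A : Type*) [Field k] [Ring A] [Algebra k A]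
    (p : ℕ) [Fact p.Prime] [CharP k p] :
    (∀ c ∈ commutatorSpan k A, c ^ p ∈ commutatorSpan k A) ∧
    (∀ n : ℕ, {x : A | x ^ p ^ n ∈ commutatorSpan k A} ⊆
        {x : A | x ^ p ^ (n + 1) ∈ commutatorSpan k A}) ∧
    {x : A | x ^ p ^ 0 ∈ commutatorSpan k A} = (commutatorSpan k A : Set A) := by
  refine ⟨fun c hc => commutatorSpan.pow_mem p hc, fun n x hx => ?_, by ext; simp⟩
  change x ^ p ^ (n + 1) ∈ commutatorSpan k A
  rw [pow_succ, pow_mul]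
  exact commutatorSpan.pow_mem p hx
end

section
/- Let k be a perfect field of characteristic p > 0 and A a finite-dimensional symmetric k-algebra with symmetrising form ⟨·,·⟩. Then for every n ∈ ℕ and every b ∈ A there exists an element c ∈ A, unique modulo KA, such that ⟨a^{p^n}, b⟩ = ⟨a, c⟩^{p^n} for all a ∈ Z(A). (This defines the Külshammer map κ_n : A/KA → A/KA.) -/
/-!
Since `k` is perfect of characteristic `p`, `a ↦ ⟨a ^ p ^ n, b⟩ ^ (1 / p ^ n)` is a `k`-linear
functional on `Z(A)`, so by nondegeneracy it equals `⟨·, c⟩` on `Z(A)` for some `c`. Two such `c`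
differ by an element of `Z(A)^⊥`, and `Z(A)^⊥ = KA` because `⟨[a, u], w⟩ = ⟨a, [u, w]⟩` shows
`KA^⊥ = Z(A)`.
-/

section Frobenius

variable (k : Type*) {A : Type*} [Field k] [Ring A] [Algebra k A] (p : ℕ)

theorem add_pow_expChar_pow_of_commute_of_algebra [ExpChar k p] {x y : A} (h : Commute x y)
    (n : ℕ) :
    (x + y) ^ p ^ n = x ^ p ^ n + y ^ p ^ n := by
  cases subsingleton_or_nontrivial A
  · exact Subsingleton.elim _ _
  · have := expChar_of_injective_algebraMap (algebraMap k A).injective p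
    exact add_pow_expChar_pow_of_commute p n h

variable [ExpChar k p] [PerfectRing k p]

/-- `a ↦ f (a ^ p ^ n) ^ (1 / p ^ n)`. -/
noncomputable def centerFrobeniusRoot (n : ℕ) (f : A →ₗ[k] k) :
    Subalgebra.center k A →ₗ[k] k where
  toFun a := (iterateFrobeniusEquiv k p n).symm (f ((a : A) ^ p ^ n))
  map_add' a b := by
    rw [Subalgebra.coe_add, add_pow_expChar_pow_of_commute_of_algebra k p
      (Subalgebra.mem_center_iff.mp a.2 b).symm, map_add, map_add]
  map_smul' r a := by
    rw [Subalgebra.coe_smul, smul_pow, map_smul, smul_eq_mul, map_mul, RingHom.id_apply,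
      smul_eq_mul, ← iterateFrobeniusEquiv_def, RingEquiv.symm_apply_apply]

theorem centerFrobeniusRoot_pow (n : ℕ) (f : A →ₗ[k] k) (a : Subalgebra.center k A) :
    centerFrobeniusRoot k p n f a ^ p ^ n = f ((a : A) ^ p ^ n) := by
  rw [← iterateFrobeniusEquiv_def k p n]
  exact RingEquiv.apply_symm_apply _ _

end Frobenius

namespace LinearMap.BilinForm

variable {k A : Type*} [Field k] [Ring A] [Algebra k A] {B : LinearMap.BilinForm k A}

theorem apply_commutator_left (hsymm : ∀ a b : A, B a b = B b a)
    (hassoc : ∀ a b c : A, B (a * b) c = B a (b * c)) (a u w : A) :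
    B (a * u - u * a) w = B a (u * w - w * u) := by
  rw [map_sub, map_sub, LinearMap.sub_apply, hassoc, hassoc, hsymm u, hassoc]

theorem orthogonal_commutatorSpan (hsymm : ∀ a b : A, B a b = B b a)
    (hassoc : ∀ a b c : A, B (a * b) c = B a (b * c))
    (hnondeg : ∀ a : A, (∀ b : A, B a b = 0) → a = 0) :
    B.orthogonal (commutatorSpan k A) = Subalgebra.toSubmodule (Subalgebra.center k A) := by
  ext w
  calc w ∈ B.orthogonal (commutatorSpan k A)
      ↔ ∀ u a : A, B a (u * w - w * u) = 0 := by
        change commutatorSpan k A ≤ LinearMap.ker (B.flip w) ↔ _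
        rw [commutatorSpan, Submodule.span_le]
        constructor
        · intro h u a
          rw [← apply_commutator_left hsymm hassoc]
          exact h ⟨a, u, rfl⟩
        · rintro h _ ⟨a, u, rfl⟩
          exact (apply_commutator_left hsymm hassoc a u w).trans (h u a)
    _ ↔ ∀ u : A, u * w = w * u := by
        refine forall_congr' fun u => ⟨fun h => sub_eq_zero.mp (hnondeg _ fun a => ?_), ?_⟩
        · rw [hsymm, h]
        · intro h a
          rw [h, sub_self, map_zero]
    _ ↔ w ∈ Subalgebra.toSubmodule (Subalgebra.center k A) := by
        rw [Subalgebra.mem_toSubmodule, Subalgebra.mem_center_iff]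

theorem nondegenerate_of_symm (hsymm : ∀ a b : A, B a b = B b a)
    (hnondeg : ∀ a : A, (∀ b : A, B a b = 0) → a = 0) : B.Nondegenerate :=
  ⟨hnondeg, fun a ha => hnondeg a fun b => (hsymm a b).trans (ha b)⟩

theorem orthogonal_center [FiniteDimensional k A] (hsymm : ∀ a b : A, B a b = B b a)
    (hassoc : ∀ a b c : A, B (a * b) c = B a (b * c))
    (hnondeg : ∀ a : A, (∀ b : A, B a b = 0) → a = 0) :
    B.orthogonal (Subalgebra.toSubmodule (Subalgebra.center k A)) = commutatorSpan k A := by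
  rw [← orthogonal_commutatorSpan hsymm hassoc hnondeg,
    orthogonal_orthogonal (nondegenerate_of_symm hsymm hnondeg) fun a b h => (hsymm b a).trans h]

theorem Nondegenerate.exists_apply_eq_on [FiniteDimensional k A] (hB : B.Nondegenerate)
    {W : Submodule k A} (φ : W →ₗ[k] k) : ∃ c : A, ∀ w : W, B c w = φ w := by
  obtain ⟨Φ, hΦ⟩ := LinearMap.exists_extend φ
  exact ⟨(B.toDual hB).symm Φ, fun w => by rw [apply_toDual_symm_apply, ← hΦ]; rfl⟩

end LinearMap.BilinForm

open LinearMap.BilinForm in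
theorem exists_kappa_unique_mod_commutatorSpan_general
    (k A : Type*) [Field k] [Ring A] [Algebra k A] [FiniteDimensional k A]
    (p : ℕ) [ExpChar k p] [PerfectRing k p]
    (B : A →ₗ[k] A →ₗ[k] k)
    (hsymm : ∀ a b : A, B a b = B b a)
    (hassoc : ∀ a b c : A, B (a * b) c = B a (b * c))
    (hnondeg : ∀ a : A, (∀ b : A, B a b = 0) → a = 0)
    (n : ℕ) (b : A) :
    ∃ c : A, (∀ a ∈ Subalgebra.center k A, B (a ^ p ^ n) b = (B a c) ^ p ^ n) ∧
      ∀ c' : A, (∀ a ∈ Subalgebra.center k A, B (a ^ p ^ n) b = (B a c') ^ p ^ n) →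
        c' - c ∈ commutatorSpan k A := by
  obtain ⟨c, hc⟩ := (nondegenerate_of_symm hsymm hnondeg).exists_apply_eq_on
    (W := Subalgebra.toSubmodule (Subalgebra.center k A))
    (centerFrobeniusRoot k p n (B.flip b))
  have hkappa : ∀ a ∈ Subalgebra.center k A, B (a ^ p ^ n) b = (B a c) ^ p ^ n := fun a ha => by
    rw [hsymm a c, hc ⟨a, ha⟩, centerFrobeniusRoot_pow, LinearMap.flip_apply]
  refine ⟨c, hkappa, fun c' hc' => ?_⟩
  rw [← orthogonal_center hsymm hassoc hnondeg]
  intro a ha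
  have hroot : B a c' = B a c := iterateFrobenius_inj k p n ((hc' a ha).symm.trans (hkappa a ha))
  change B a (c' - c) = 0
  rw [map_sub, hroot, sub_self]

/-- For a finite-dimensional symmetric algebra `A` over a perfect field `k` of
characteristic `p > 0`, every `n ∈ ℕ` and every `b ∈ A` admit an element `c ∈ A`,
unique modulo `KA`, with `⟨a^{p^n}, b⟩ = ⟨a, c⟩^{p^n}` for all central `a`.
(This defines the Külshammer map `κ_n : A/KA → A/KA`.) -/
theorem exists_kappa_unique_mod_commutatorSpan
    (k A : Type*) [Field k] [Ring A] [Algebra k A] [FiniteDimensional k A]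
    (p : ℕ) [Fact p.Prime] [CharP k p] [ExpChar k p] [PerfectRing k p]
    (B : A →ₗ[k] A →ₗ[k] k)
    (hsymm : ∀ a b : A, B a b = B b a)
    (hassoc : ∀ a b c : A, B (a * b) c = B a (b * c))
    (hnondeg : ∀ a : A, (∀ b : A, B a b = 0) → a = 0)
    (n : ℕ) (b : A) :
    ∃ c : A, (∀ a ∈ Subalgebra.center k A, B (a ^ p ^ n) b = (B a c) ^ p ^ n) ∧
      ∀ c' : A, (∀ a ∈ Subalgebra.center k A, B (a ^ p ^ n) b = (B a c') ^ p ^ n) →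
        c' - c ∈ commutatorSpan k A :=
  exists_kappa_unique_mod_commutatorSpan_general k A p B hsymm hassoc hnondeg n b
end

section
/- Let k be a field and let A = k[ε]/(ε²) be the algebra of dual numbers over k. Then the trivial extension algebra T A = A ⊕ Hom_k(A,k) is isomorphic as a k-algebra to A ⊗_k A. -/
/-! The `A`-bimodule structure on the `k`-linear dual `Hom_k(A, k)` of a `k`-algebra `A`,
given by `(a · f · b) (x) = f (b * x * a)`, and the resulting trivial extension algebra
`T A = TrivSqZeroExt A (Module.Dual k A)`. -/

section DualBimodule

variable {k A : Type*} [CommSemiring k] [Semiring A] [Algebra k A]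

noncomputable instance Module.Dual.leftAlgebraSMul : SMul A (Module.Dual k A) :=
  ⟨fun a f => f ∘ₗ LinearMap.mulRight k a⟩

noncomputable instance Module.Dual.rightAlgebraSMul : SMul Aᵐᵒᵖ (Module.Dual k A) :=
  ⟨fun b f => f ∘ₗ LinearMap.mulLeft k b.unop⟩

@[simp] theorem Module.Dual.leftAlgebraSMul_apply (a : A) (f : Module.Dual k A) (x : A) :
    (a • f) x = f (x * a) := rfl

@[simp] theorem Module.Dual.rightAlgebraSMul_apply (b : Aᵐᵒᵖ) (f : Module.Dual k A) (x : A) :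
    (b • f) x = f (b.unop * x) := rfl

noncomputable instance Module.Dual.leftAlgebraModule : Module A (Module.Dual k A) where
  one_smul f := LinearMap.ext fun x => by simp
  mul_smul a b f := LinearMap.ext fun x => by simp [mul_assoc]
  smul_zero a := LinearMap.ext fun x => rfl
  smul_add a f g := LinearMap.ext fun x => rfl
  add_smul a b f := LinearMap.ext fun x => by simp [mul_add]
  zero_smul f := LinearMap.ext fun x => by simp

noncomputable instance Module.Dual.rightAlgebraModule : Module Aᵐᵒᵖ (Module.Dual k A) where
  one_smul f := LinearMap.ext fun x => by simp
  mul_smul a b f := LinearMap.ext fun x => by simp [mul_assoc]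
  smul_zero a := LinearMap.ext fun x => rfl
  smul_add a f g := LinearMap.ext fun x => rfl
  add_smul a b f := LinearMap.ext fun x => by simp [add_mul]
  zero_smul f := LinearMap.ext fun x => by simp

instance : SMulCommClass A Aᵐᵒᵖ (Module.Dual k A) :=
  ⟨fun a b f => LinearMap.ext fun x => by simp [mul_assoc]⟩

instance : IsScalarTower k A (Module.Dual k A) :=
  ⟨fun c a f => LinearMap.ext fun x => by
    simp only [Module.Dual.leftAlgebraSMul_apply, LinearMap.smul_apply, smul_eq_mul,
      mul_smul_comm, map_smul]⟩

instance : IsScalarTower k Aᵐᵒᵖ (Module.Dual k A) :=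
  ⟨fun c b f => LinearMap.ext fun x => by
    simp only [Module.Dual.rightAlgebraSMul_apply, LinearMap.smul_apply, smul_eq_mul,
      MulOpposite.unop_smul, smul_mul_assoc, map_smul]⟩

end DualBimodule

/-- The trivial extension `T A = A ⊕ Hom_k(A,k)` of `A` by its `k`-linear dual, with
multiplication `(a, f) · (b, g) = (a b, a · g + f · b)`. -/
noncomputable abbrev TrivExt (k A : Type*) [CommSemiring k] [Semiring A] [Algebra k A] :=
  TrivSqZeroExt A (Module.Dual k A)

open scoped TensorProduct

/-! The functional `ε* = snd` generates `Hom_k(A, k)` freely as an `A`-module, since `a • ε*`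
takes the values `a.snd` and `a.fst` at `1` and `ε`. Hence `T A ≅ A ⋉ A = A[ε']`, and adjoining a
square-zero central `ε'` to `A` is base change of `k[ε']` along `k → A`, so `A[ε'] ≅ A ⊗ k[ε'] =
A ⊗ A`. -/

open TrivSqZeroExt DualNumber

instance Module.Dual.isCentralScalar {k A : Type*} [CommSemiring k] [CommSemiring A]
    [Algebra k A] : IsCentralScalar A (Module.Dual k A) :=
  ⟨fun a f => LinearMap.ext fun x => by simp [mul_comm]⟩

namespace TrivSqZeroExt

variable {R M N : Type*} [CommSemiring R] [AddCommMonoid M] [Module R M] [Module Rᵐᵒᵖ M]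
  [IsCentralScalar R M] [AddCommMonoid N] [Module R N] [Module Rᵐᵒᵖ N] [IsCentralScalar R N]

def mapEquiv (e : M ≃ₗ[R] N) : TrivSqZeroExt R M ≃ₐ[R] TrivSqZeroExt R N :=
  AlgEquiv.ofAlgHom (map e) (map e.symm) (algHom_ext fun n => by simp)
    (algHom_ext fun m => by simp)

end TrivSqZeroExt

namespace DualNumber

variable {R : Type*} [CommSemiring R]

theorem dual_ext {f g : Module.Dual R R[ε]} (h1 : f 1 = g 1) (hε : f ε = g ε) : f = g := by
  refine linearMap_ext (fun r => ?_) (fun r => ?_)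
  · rw [← mul_one r, ← smul_eq_mul, inl_smul, inl_one, map_smul, map_smul, h1]
  · rw [inr_eq_smul_eps, map_smul, map_smul, hε]

theorem smul_sndHom_apply_one (a : R[ε]) : (a • sndHom R R) 1 = a.snd := by simp

theorem smul_sndHom_apply_eps (a : R[ε]) : (a • sndHom R R) ε = a.fst := by simp

variable (R) in
noncomputable def dualEquiv : R[ε] ≃ₗ[R[ε]] Module.Dual R R[ε] :=
  LinearEquiv.ofBijective (LinearMap.toSpanSingleton R[ε] _ (sndHom R R)) <| by
    refine ⟨fun a b hab => TrivSqZeroExt.ext ?_ ?_,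
      fun f => ⟨inl (f ε) + inr (f 1), dual_ext ?_ ?_⟩⟩
    · simpa only [LinearMap.toSpanSingleton_apply, smul_sndHom_apply_eps]
        using LinearMap.congr_fun hab ε
    · simpa only [LinearMap.toSpanSingleton_apply, smul_sndHom_apply_one]
        using LinearMap.congr_fun hab 1
    · simp only [LinearMap.toSpanSingleton_apply, smul_sndHom_apply_one, snd_add, snd_inl,
        snd_inr, zero_add]
    · simp only [LinearMap.toSpanSingleton_apply, smul_sndHom_apply_eps, fst_add, fst_inl,
        fst_inr, add_zero]

end DualNumber

open Algebra.TensorProduct in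
noncomputable def dualNumberEquivTensor (R A : Type*) [CommSemiring R] [Semiring A]
    [Algebra R A] : A[ε] ≃ₐ[R] A ⊗[R] R[ε] :=
  AlgEquiv.ofAlgHom
    (DualNumber.lift ⟨(includeLeft, 1 ⊗ₜ ε), by simp [eps_mul_eps],
      fun a => by simp [Commute, SemiconjBy]⟩)
    (Algebra.TensorProduct.lift (inlAlgHom R A A)
      (DualNumber.lift ⟨(Algebra.ofId R A[ε], ε), eps_mul_eps, fun _ => commute_eps_left _⟩)
      fun a x => by
        rw [lift_apply_apply]
        exact (Algebra.commute_algebraMap_right _ _).add_right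
          ((Algebra.commute_algebraMap_right _ _).mul_right (commute_eps_right _)))
    (Algebra.TensorProduct.ext (AlgHom.ext fun a => by simp) (DualNumber.algHom_ext (by simp)))
    (DualNumber.algHom_ext' (AlgHom.ext fun a => by simp)
      (LinearMap.ext fun a => by simp [inl_mul_eq_smul]))

/-- For the algebra `A = k[ε]/(ε²)` of dual numbers over a field `k`, the trivial
extension algebra `T A = A ⊕ Hom_k(A,k)` is isomorphic, as a `k`-algebra, to
`A ⊗_k A`. -/
theorem trivExt_dualNumber_iso_tensor (k : Type) [Field k] :
    Nonempty (TrivExt k (DualNumber k) ≃ₐ[k] (DualNumber k ⊗[k] DualNumber k)) :=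
  ⟨((mapEquiv (DualNumber.dualEquiv k).symm).restrictScalars k).trans
    (dualNumberEquivTensor k (DualNumber k))⟩
end

section
/- Let k be a field, A = k[ε]/(ε²) the dual numbers over k, and R = A ⊗_k A. Set u = 1 ⊗ ε − ε ⊗ 1 and v = 1 ⊗ ε + ε ⊗ 1 in R. Then the 2-periodic complex of free R-modules ⋯ → R →(·u) R →(·v) R →(·u) R → A, with augmentation the multiplication map μ : A ⊗_k A → A, is exact: (i) the kernel of μ equals the ideal uR (the image of multiplication by u); (ii) the kernel of multiplication by u on R equals the image of multiplication by v; (iii) the kernel of multiplication by v on R equals the image of multiplication by u. In particular this gives a free resolution of A as an A ⊗_k A-module. -/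
/-!
Over `A = k[ε]`, the ring `A ⊗ A` is free as a left `A`-module on `1 ⊗ 1` and `1 ⊗ ε`, so every
element is uniquely `p ⊗ 1 + q ⊗ ε`. In these coordinates multiplication by
`w c = 1 ⊗ ε + cε ⊗ 1` is `(p, q) ↦ (cεp, p + cεq)`; its kernel `p = -cεq` consists exactly of
the elements `w (-c) * (q ⊗ 1)`, and `w c * w (-c) = 0`. Likewise `μ (p ⊗ 1 + q ⊗ ε) = p + εq`
vanishes iff `p = -εq`. Since `u = w (-1)` and `v = w 1`, this is the whole theorem.
-/

open scoped TensorProduct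
open DualNumber

namespace DualNumber

section Coordinates

variable {k M : Type*} [CommSemiring k] [AddCommMonoid M] [Module k M]

theorem eq_fst_smul_one_add_snd_smul_eps (x : k[ε]) : x = x.fst • 1 + x.snd • ε := by
  ext <;> simp

theorem exists_eq_tmul_one_add_tmul_eps (z : M ⊗[k] k[ε]) :
    ∃ p q : M, z = p ⊗ₜ 1 + q ⊗ₜ ε := by
  induction z using TensorProduct.induction_on with
  | zero => exact ⟨0, 0, by simp⟩
  | tmul m x =>
    refine ⟨x.fst • m, x.snd • m, ?_⟩
    conv_lhs => rw [eq_fst_smul_one_add_snd_smul_eps x]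
    rw [TensorProduct.tmul_add, TensorProduct.tmul_smul, TensorProduct.tmul_smul,
      TensorProduct.smul_tmul', TensorProduct.smul_tmul']
  | add z₁ z₂ h₁ h₂ =>
    obtain ⟨p₁, q₁, rfl⟩ := h₁
    obtain ⟨p₂, q₂, rfl⟩ := h₂
    exact ⟨p₁ + p₂, q₁ + q₂, by simp only [TensorProduct.add_tmul]; abel⟩

theorem tmul_one_add_tmul_eps_eq_zero_iff {p q : M} :
    p ⊗ₜ[k] (1 : k[ε]) + q ⊗ₜ ε = 0 ↔ p = 0 ∧ q = 0 := by
  refine ⟨fun h => ⟨?_, ?_⟩, fun ⟨hp, hq⟩ => by simp [hp, hq]⟩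
  · simpa using congrArg
      ((TensorProduct.rid k M).toLinearMap ∘ₗ (TrivSqZeroExt.fstHom k k k).toLinearMap.lTensor M) h
  · simpa using congrArg
      ((TensorProduct.rid k M).toLinearMap ∘ₗ (TrivSqZeroExt.sndHom k k).lTensor M) h

end Coordinates

variable {k : Type*} [CommRing k]

/-- Instance search does not find the ring axioms (e.g. `LeftDistribClass`) for the
multiplication that `*` elaborates to on `k[ε] ⊗[k] k[ε]`, so the ring structure is fixed here. -/
abbrev tensorSelfCommRing : CommRing (k[ε] ⊗[k] k[ε]) := Algebra.TensorProduct.instCommRing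

attribute [local instance] tensorSelfCommRing

theorem one_tmul_eps_add_smul_eps_tmul_one_mul (c : k) (p q : k[ε]) :
    ((1 : k[ε]) ⊗ₜ[k] (ε : k[ε]) + (c • ε) ⊗ₜ[k] 1) * (p ⊗ₜ[k] 1 + q ⊗ₜ[k] ε) =
      (c • (ε * p)) ⊗ₜ[k] 1 + (p + c • (ε * q)) ⊗ₜ[k] ε := by
  simp only [mul_add, add_mul, Algebra.TensorProduct.tmul_mul_tmul, one_mul, mul_one,
    eps_mul_eps, TensorProduct.tmul_zero, smul_mul_assoc, TensorProduct.add_tmul]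
  abel

theorem ker_mulLeft_one_tmul_eps_add_smul_eps_tmul_one (c : k) :
    LinearMap.ker (LinearMap.mulLeft k ((1 : k[ε]) ⊗ₜ[k] (ε : k[ε]) + (c • ε) ⊗ₜ[k] 1)) =
      LinearMap.range (LinearMap.mulLeft k ((1 : k[ε]) ⊗ₜ[k] (ε : k[ε]) + (-c • ε) ⊗ₜ[k] 1)) := by
  have mul_tmul_one (c : k) (q : k[ε]) :
      ((1 : k[ε]) ⊗ₜ[k] (ε : k[ε]) + (c • ε) ⊗ₜ[k] 1) * (q ⊗ₜ[k] 1) =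
        (c • (ε * q)) ⊗ₜ[k] 1 + q ⊗ₜ[k] ε := by
    simpa using one_tmul_eps_add_smul_eps_tmul_one_mul c q 0
  apply le_antisymm
  · intro z hz
    obtain ⟨p, q, rfl⟩ := exists_eq_tmul_one_add_tmul_eps z
    rw [LinearMap.mem_ker, LinearMap.mulLeft_apply, one_tmul_eps_add_smul_eps_tmul_one_mul,
      tmul_one_add_tmul_eps_eq_zero_iff] at hz
    refine ⟨q ⊗ₜ 1, ?_⟩
    rw [LinearMap.mulLeft_apply, mul_tmul_one, eq_neg_of_add_eq_zero_left hz.2, neg_smul]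
  · rintro _ ⟨y, rfl⟩
    have w_mul_w_neg : ((1 : k[ε]) ⊗ₜ[k] (ε : k[ε]) + (c • ε) ⊗ₜ[k] 1) *
        ((1 : k[ε]) ⊗ₜ[k] (ε : k[ε]) + (-c • ε) ⊗ₜ[k] 1) = 0 := by
      rw [add_comm _ ((-c • ε) ⊗ₜ[k] 1), one_tmul_eps_add_smul_eps_tmul_one_mul]
      simp
    rw [LinearMap.mem_ker, LinearMap.mulLeft_apply, LinearMap.mulLeft_apply, ← mul_assoc,
      w_mul_w_neg, zero_mul]

theorem ker_mul'_eq_range_mulLeft :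
    LinearMap.ker (LinearMap.mul' k k[ε]) =
      LinearMap.range (LinearMap.mulLeft k ((1 : k[ε]) ⊗ₜ[k] (ε : k[ε]) - (ε : k[ε]) ⊗ₜ[k] 1)) := by
  apply le_antisymm
  · intro z hz
    obtain ⟨p, q, rfl⟩ := exists_eq_tmul_one_add_tmul_eps z
    rw [LinearMap.mem_ker, map_add, LinearMap.mul'_apply, LinearMap.mul'_apply, mul_one,
      mul_comm q] at hz
    refine ⟨q ⊗ₜ 1, ?_⟩
    rw [LinearMap.mulLeft_apply, eq_neg_of_add_eq_zero_left hz, sub_mul,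
      Algebra.TensorProduct.tmul_mul_tmul, Algebra.TensorProduct.tmul_mul_tmul, one_mul, mul_one,
      mul_one, TensorProduct.neg_tmul, sub_eq_neg_add]
  · rintro _ ⟨y, rfl⟩
    rw [LinearMap.mem_ker, LinearMap.mulLeft_apply, ← Algebra.TensorProduct.lmul'_toLinearMap,
      AlgHom.toLinearMap_apply, map_mul, map_sub, Algebra.TensorProduct.lmul'_apply_tmul,
      Algebra.TensorProduct.lmul'_apply_tmul, one_mul, mul_one, sub_self, zero_mul]

end DualNumber

/-- Let `A = k[ε]/(ε²)` be the dual numbers over a field `k`, `R = A ⊗_k A`,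
`u = 1 ⊗ ε - ε ⊗ 1` and `v = 1 ⊗ ε + ε ⊗ 1`.  Then the 2-periodic complex
`⋯ → R →(·u) R →(·v) R →(·u) R →(μ) A` is exact:
(i) `ker μ = im (·u)`, (ii) `ker (·u) = im (·v)`, (iii) `ker (·v) = im (·u)`;
in particular it is a free resolution of `A` as an `A ⊗_k A`-module. -/
theorem dualNumber_periodic_resolution_exact (k : Type) [Field k] :
    ∀ u v : DualNumber k ⊗[k] DualNumber k,
      u = 1 ⊗ₜ[k] (ε : DualNumber k) - (ε : DualNumber k) ⊗ₜ[k] 1 →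
      v = 1 ⊗ₜ[k] (ε : DualNumber k) + (ε : DualNumber k) ⊗ₜ[k] 1 →
      LinearMap.ker (LinearMap.mul' k (DualNumber k)) =
          LinearMap.range (LinearMap.mulLeft k u) ∧
      LinearMap.ker (LinearMap.mulLeft k u) =
          LinearMap.range (LinearMap.mulLeft k v) ∧
      LinearMap.ker (LinearMap.mulLeft k v) =
          LinearMap.range (LinearMap.mulLeft k u) := by
  rintro u v rfl rfl
  have hu : (1 : k[ε]) ⊗ₜ[k] (ε : k[ε]) - (ε : k[ε]) ⊗ₜ[k] 1 = 1 ⊗ₜ ε + ((-1 : k) • ε) ⊗ₜ 1 := by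
    rw [neg_smul, one_smul, TensorProduct.neg_tmul, sub_eq_add_neg]
  have hv : (1 : k[ε]) ⊗ₜ[k] (ε : k[ε]) + (ε : k[ε]) ⊗ₜ[k] 1 = 1 ⊗ₜ ε + (-(-1 : k) • ε) ⊗ₜ 1 := by
    rw [neg_neg, one_smul]
  refine ⟨ker_mul'_eq_range_mulLeft, ?_, ?_⟩
  · rw [hu, hv]
    exact ker_mulLeft_one_tmul_eps_add_smul_eps_tmul_one (-1)
  · rw [hu, hv, neg_neg]
    exact ker_mulLeft_one_tmul_eps_add_smul_eps_tmul_one 1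
end
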